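/- Let h ∈ ℝ[x,y,z] be irreducible with h(O) = 0, and assume h divides each of f_{x,y}, f_{x,z}, f_{y,z} (so that the surface V(h) is contained in the discriminant variety of q). Fix A, B, C > 0 and define: X_ℝ = {v ∈ ℝ³ : h(v) = 0}; S_ℝ = {v ∈ X_ℝ : ∂h/∂x(v) = ∂h/∂y(v) = ∂h/∂z(v) = 0} (the real singular locus); 𝔛_ℝ = {v ∈ X_ℝ : e(v) = 0}, where e ∈ ℝ[x,y,z] is the determinant of the 3×3 matrix of polynomials with rows (Ax, By, Cz), (∂h/∂x, ∂h/∂y, ∂h/∂z), and (g·∂f/∂x − f·∂g/∂x, g·∂f/∂y − f·∂g/∂y, g·∂f/∂z − f·∂g/∂z); and 𝔷_ℝ = {v = (v₁,v₂,v₃) ∈ X_ℝ : all 2×2 minors of the 2×3 matrix with rows (A·v₁, B·v₂, C·v₃) and ∇h(v) vanish}. Then q tends to L at O along X_ℝ if and only if q tends to L at O along each of S_ℝ, 𝔛_ℝ, and 𝔷_ℝ. -/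

import Mathlib

open MvPolynomial Filter Topology

/-- The quotient `q(v) = f(v)/g(v)`, with the convention `q(v) = 0` when `g(v) = 0`. -/
noncomputable def quotFun (f g : MvPolynomial (Fin 3) ℝ) (v : EuclideanSpace ℝ (Fin 3)) : ℝ :=
  eval v f / eval v g

/-- The polynomial `f_{xᵢ,xⱼ} = xᵢ(g ∂f/∂xⱼ − f ∂g/∂xⱼ) − xⱼ(g ∂f/∂xᵢ − f ∂g/∂xᵢ)`. -/
noncomputable def minorPoly (f g : MvPolynomial (Fin 3) ℝ) (i j : Fin 3) :
    MvPolynomial (Fin 3) ℝ :=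
  X i * (g * pderiv j f - f * pderiv j g) - X j * (g * pderiv i f - f * pderiv i g)

/-- `q` tends to `L` at the origin along the set `S`. -/
def TendsAlong (f g : MvPolynomial (Fin 3) ℝ) (S : Set (EuclideanSpace ℝ (Fin 3))) (L : ℝ) :
    Prop :=
  Tendsto (quotFun f g) (𝓝[S \ {0}] 0) (𝓝 L)

/-- The real surface `X_ℝ = {h = 0}`. -/
def surf (h : MvPolynomial (Fin 3) ℝ) : Set (EuclideanSpace ℝ (Fin 3)) :=
  {v | eval v h = 0}

/-- The real singular locus `S_ℝ` of the surface `{h = 0}`. -/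
def singLocus (h : MvPolynomial (Fin 3) ℝ) : Set (EuclideanSpace ℝ (Fin 3)) :=
  {v ∈ surf h | eval v (pderiv 0 h) = 0 ∧ eval v (pderiv 1 h) = 0 ∧ eval v (pderiv 2 h) = 0}

/-- The determinant polynomial `e` with rows `(Ax, By, Cz)`, `∇h` and `g∇f − f∇g`. -/
noncomputable def ePoly (A B C : ℝ) (f g h : MvPolynomial (Fin 3) ℝ) :
    MvPolynomial (Fin 3) ℝ :=
  Matrix.det (Matrix.of
    ![![MvPolynomial.C A * X 0, MvPolynomial.C B * X 1, MvPolynomial.C C * X 2],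
      ![pderiv 0 h, pderiv 1 h, pderiv 2 h],
      ![g * pderiv 0 f - f * pderiv 0 g, g * pderiv 1 f - f * pderiv 1 g,
        g * pderiv 2 f - f * pderiv 2 g]])

/-- The locus `𝔛_ℝ = {v ∈ X_ℝ : e(v) = 0}` of regular critical points. -/
noncomputable def fracX (A B C : ℝ) (f g h : MvPolynomial (Fin 3) ℝ) :
    Set (EuclideanSpace ℝ (Fin 3)) :=
  {v ∈ surf h | eval v (ePoly A B C f g h) = 0}

/-- The nontransversality locus `𝔷_ℝ`: points of `X_ℝ` where all `2 × 2` minors of the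
matrix with rows `(Av₁, Bv₂, Cv₃)` and `∇h(v)` vanish. -/
def fracZ (A B C : ℝ) (h : MvPolynomial (Fin 3) ℝ) : Set (EuclideanSpace ℝ (Fin 3)) :=
  {v ∈ surf h |
    A * v 0 * eval v (pderiv 1 h) - B * v 1 * eval v (pderiv 0 h) = 0 ∧
    A * v 0 * eval v (pderiv 2 h) - C * v 2 * eval v (pderiv 0 h) = 0 ∧
    B * v 1 * eval v (pderiv 2 h) - C * v 2 * eval v (pderiv 1 h) = 0}

/-!
Near `O`, the level set of `N = Ax² + By² + Cz²` through a point `v ≠ O` of `X_ℝ` meets `X_ℝ` in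
a compact set that stays close to `O` and avoids `O` and the other zeros of `g`, so `q` attains a
minimum and a maximum on it, bracketing `q(v)`. At such an extremum the Lagrange multiplier rule
makes `∇N`, `∇h` and `∇q` linearly dependent; as `∇N = 2 (Ax, By, Cz)` and
`g² ∇q = g ∇f − f ∇g`, this is exactly `e = 0`. Both extremal points therefore lie on `𝔛_ℝ`, and
the limit along `𝔛_ℝ` squeezes the limit along `X_ℝ`.
-/

namespace MvPolynomial

variable {σ : Type*}

theorem continuous_eval_euclideanSpace (P : MvPolynomial σ ℝ) :
    Continuous fun v : EuclideanSpace ℝ σ => eval v P :=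
  (continuous_eval P).comp (PiLp.continuous_ofLp 2 _)

variable [Fintype σ]

noncomputable def weightedSumSq (a : σ → ℝ) : MvPolynomial σ ℝ :=
  ∑ i, C (a i) * X i ^ 2

theorem eval_weightedSumSq (a : σ → ℝ) (v : σ → ℝ) :
    eval v (weightedSumSq a) = ∑ i, a i * v i ^ 2 := by
  simp [weightedSumSq]

theorem eval_weightedSumSq_zero (a : σ → ℝ) : eval 0 (weightedSumSq a) = 0 := by
  rw [eval_weightedSumSq]
  simp

theorem mul_norm_sq_le_eval_weightedSumSq {a : σ → ℝ} {m : ℝ} (ham : ∀ i, m ≤ a i)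
    (v : EuclideanSpace ℝ σ) : m * ‖v‖ ^ 2 ≤ eval v (weightedSumSq a) := by
  rw [EuclideanSpace.real_norm_sq_eq, eval_weightedSumSq, Finset.mul_sum]
  exact Finset.sum_le_sum fun i _ => mul_le_mul_of_nonneg_right (ham i) (sq_nonneg _)

theorem eventually_levelSet_weightedSumSq_subset_ball {a : σ → ℝ} {m : ℝ} (hm : 0 < m)
    (ham : ∀ i, m ≤ a i) {ρ : ℝ} (hρ : 0 < ρ) :
    ∀ᶠ v : EuclideanSpace ℝ σ in 𝓝 0,
      {u : EuclideanSpace ℝ σ | eval u (weightedSumSq a) = eval v (weightedSumSq a)} ⊆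
        Metric.ball 0 ρ := by
  have hcont := (continuous_eval_euclideanSpace (weightedSumSq a)).tendsto 0
  rw [WithLp.ofLp_zero, eval_weightedSumSq_zero] at hcont
  filter_upwards [hcont.eventually (gt_mem_nhds (by positivity : 0 < m * ρ ^ 2))]
    with v hv u hu
  have hu' : m * ‖u‖ ^ 2 < m * ρ ^ 2 :=
    (mul_norm_sq_le_eval_weightedSumSq ham u).trans_lt (hu ▸ hv)
  rw [mem_ball_zero_iff]
  exact lt_of_pow_lt_pow_left₀ 2 hρ.le (lt_of_mul_lt_mul_left hu' hm.le)

noncomputable def evalFDeriv (P : MvPolynomial σ ℝ) (v : EuclideanSpace ℝ σ) :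
    EuclideanSpace ℝ σ →L[ℝ] ℝ :=
  ∑ i, eval v (pderiv i P) • EuclideanSpace.proj i

theorem evalFDeriv_apply (P : MvPolynomial σ ℝ) (v w : EuclideanSpace ℝ σ) :
    evalFDeriv P v w = ∑ i, eval v (pderiv i P) * w i := by
  simp [evalFDeriv]

variable [DecidableEq σ]

theorem eval_pderiv_weightedSumSq (a : σ → ℝ) (v : σ → ℝ) (j : σ) :
    eval v (pderiv j (weightedSumSq a)) = 2 * a j * v j := by
  simp [weightedSumSq, pderiv_X, Pi.single_apply, mul_comm, mul_left_comm]

theorem evalFDeriv_single (P : MvPolynomial σ ℝ) (v : EuclideanSpace ℝ σ) (i : σ) :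
    evalFDeriv P v (EuclideanSpace.single i 1) = eval v (pderiv i P) := by
  simp [evalFDeriv_apply]

theorem hasStrictFDerivAt_eval (P : MvPolynomial σ ℝ) (v : EuclideanSpace ℝ σ) :
    HasStrictFDerivAt (fun u : EuclideanSpace ℝ σ => eval u P) (evalFDeriv P v) v := by
  induction P using MvPolynomial.induction_on with
  | C a =>
    have h0 : evalFDeriv (C a) v = 0 := by ext w; simp [evalFDeriv_apply]
    simpa [h0] using hasStrictFDerivAt_const a v
  | add p q hp hq =>
    have hfun : (fun u : EuclideanSpace ℝ σ => eval u (p + q)) =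
        (fun u : EuclideanSpace ℝ σ => eval u p) + fun u : EuclideanSpace ℝ σ => eval u q := by
      ext; simp
    have hsum : evalFDeriv (p + q) v = evalFDeriv p v + evalFDeriv q v := by
      ext w; simp [evalFDeriv_apply, Finset.sum_add_distrib, add_mul]
    rw [hfun, hsum]
    exact hp.add hq
  | mul_X p i hp =>
    have hfun : (fun u : EuclideanSpace ℝ σ => eval u (p * X i)) =
        (fun u : EuclideanSpace ℝ σ => eval u p) * fun u : EuclideanSpace ℝ σ => u i := by
      ext; simp
    have hprod : evalFDeriv (p * X i) v =
        eval v p • EuclideanSpace.proj i + v i • evalFDeriv p v := by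
      ext w
      simp [evalFDeriv_apply, pderiv_X, Pi.single_apply, apply_ite,
        Finset.sum_add_distrib, Finset.mul_sum, mul_add, mul_comm, mul_left_comm]
    rw [hfun, hprod]
    exact hp.mul (EuclideanSpace.proj (𝕜 := ℝ) i).hasStrictFDerivAt

end MvPolynomial

theorem IsLocalExtrOn.det_eq_zero_of_hasStrictFDerivAt {E : Type*} [NormedAddCommGroup E]
    [NormedSpace ℝ E] [CompleteSpace E] {n : ℕ} (b : Module.Basis (Fin (n + 1)) ℝ E)
    {f : Fin n → E → ℝ} {f' : Fin n → StrongDual ℝ E} {φ : E → ℝ} {φ' : StrongDual ℝ E} {x₀ : E}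
    (hextr : IsLocalExtrOn φ {x | ∀ i, f i x = f i x₀} x₀)
    (hf' : ∀ i, HasStrictFDerivAt (f i) (f' i) x₀) (hφ' : HasStrictFDerivAt φ φ' x₀) :
    (Matrix.of fun i j => Matrix.vecCons φ' f' i (b j)).det = 0 := by
  obtain ⟨Λ, Λ₀, hΛ, hsum⟩ := hextr.exists_multipliers_of_hasStrictFDerivAt hf' hφ'
  refine Matrix.exists_vecMul_eq_zero_iff.mp ⟨Matrix.vecCons Λ₀ Λ, ?_, ?_⟩
  · simpa [Prod.ext_iff, and_comm] using hΛ
  · ext j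
    have := congr($hsum (b j))
    simp only [add_apply, sum_apply, smul_apply, smul_eq_mul, zero_apply, Matrix.vecMul,
      dotProduct, Matrix.of_apply, Fin.sum_univ_succ, Matrix.cons_val_zero, Matrix.cons_val_succ,
      Pi.zero_apply] at this ⊢
    linarith

theorem tendsto_of_forall_mem_exists_between {α β : Type*} [LinearOrder β] [TopologicalSpace β]
    [OrderTopology β] {l l' : Filter α} {F : α → β} {L : β} (hF : Tendsto F l' (𝓝 L))
    (h : ∀ U ∈ l', ∀ᶠ v in l, ∃ p ∈ U, ∃ p' ∈ U, F p ≤ F v ∧ F v ≤ F p') :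
    Tendsto F l (𝓝 L) := by
  rw [tendsto_order] at hF ⊢
  refine ⟨fun b hb => ?_, fun b hb => ?_⟩
  · filter_upwards [h _ (hF.1 b hb)] with v ⟨p, hp, _, _, hpv, _⟩
    exact lt_of_lt_of_le hp hpv
  · filter_upwards [h _ (hF.2 b hb)] with v ⟨_, _, p', hp', _, hvp'⟩
    exact lt_of_le_of_lt hvp' hp'

theorem TendsAlong.mono {f g : MvPolynomial (Fin 3) ℝ} {S T : Set (EuclideanSpace ℝ (Fin 3))}
    {L : ℝ} (hS : TendsAlong f g S L) (hTS : T ⊆ S) : TendsAlong f g T L :=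
  hS.mono_left (nhdsWithin_mono _ (Set.sdiff_subset_sdiff_left hTS))

theorem hasStrictFDerivAt_quotFun (f g : MvPolynomial (Fin 3) ℝ) {v : EuclideanSpace ℝ (Fin 3)}
    (hgv : eval v g ≠ 0) :
    HasStrictFDerivAt (quotFun f g)
      ((eval v g ^ 2)⁻¹ • (eval v g • evalFDeriv f v - eval v f • evalFDeriv g v)) v := by
  have hinv := (hasStrictDerivAt_inv hgv).comp_hasStrictFDerivAt v (hasStrictFDerivAt_eval g v)
  have hfun : quotFun f g = (fun u : EuclideanSpace ℝ (Fin 3) => eval u f) *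
      Inv.inv ∘ fun u : EuclideanSpace ℝ (Fin 3) => eval u g := by
    ext u; simp [quotFun, div_eq_mul_inv]
  have hderiv : (eval v g ^ 2)⁻¹ • (eval v g • evalFDeriv f v - eval v f • evalFDeriv g v) =
      eval v f • -(eval v g ^ 2)⁻¹ • evalFDeriv g v + (eval v g)⁻¹ • evalFDeriv f v := by
    ext w
    simp only [smul_apply, sub_apply, smul_eq_mul, add_apply, neg_mul, mul_neg]
    field_simp
    ring
  rw [hfun, hderiv]
  exact (hasStrictFDerivAt_eval f v).mul hinv

theorem continuousAt_quotFun (f g : MvPolynomial (Fin 3) ℝ) {v : EuclideanSpace ℝ (Fin 3)}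
    (hgv : eval v g ≠ 0) : ContinuousAt (quotFun f g) v :=
  (hasStrictFDerivAt_quotFun f g hgv).continuousAt

theorem eval_ePoly_eq_zero_of_isLocalExtrOn {A B C : ℝ} {f g h : MvPolynomial (Fin 3) ℝ}
    {p : EuclideanSpace ℝ (Fin 3)} (hgp : eval p g ≠ 0)
    (hextr : IsLocalExtrOn (quotFun f g)
      {u | eval u (weightedSumSq ![A, B, C]) = eval p (weightedSumSq ![A, B, C]) ∧
        eval u h = eval p h} p) :
    eval p (ePoly A B C f g h) = 0 := by
  have hdet := IsLocalExtrOn.det_eq_zero_of_hasStrictFDerivAt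
    (EuclideanSpace.basisFun (Fin 3) ℝ).toBasis
    (f := ![fun u => eval u (weightedSumSq ![A, B, C]), fun u => eval u h])
    (f' := ![evalFDeriv (weightedSumSq ![A, B, C]) p, evalFDeriv h p])
    (by simpa [Fin.forall_fin_two] using hextr)
    (by simp [Fin.forall_fin_two, hasStrictFDerivAt_eval]) (hasStrictFDerivAt_quotFun f g hgp)
  simp only [OrthonormalBasis.coe_toBasis, EuclideanSpace.basisFun_apply, Matrix.det_fin_three,
    Matrix.of_apply, Matrix.cons_val_zero, Matrix.cons_val_one, Matrix.cons_val, smul_apply,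
    sub_apply, smul_eq_mul, evalFDeriv_single, eval_pderiv_weightedSumSq] at hdet
  simp only [ePoly, Matrix.det_fin_three, Matrix.of_apply, Matrix.cons_val', Matrix.cons_val_zero,
    Matrix.cons_val_fin_one, Matrix.cons_val_one, Matrix.cons_val, map_sub, map_add, map_mul,
    eval_C, eval_X]
  field_simp at hdet
  linear_combination hdet / 2

theorem exists_mem_fracX_quotFun_le_le {A B C m ρ : ℝ} (hm : 0 < m) (ham : ∀ i, m ≤ ![A, B, C] i)
    {f g h : MvPolynomial (Fin 3) ℝ}
    (hgρ : ∀ u ∈ Metric.ball (0 : EuclideanSpace ℝ (Fin 3)) ρ, eval u g = 0 → u = 0)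
    {v : EuclideanSpace ℝ (Fin 3)} (hv : v ∈ surf h) (hv0 : v ≠ 0)
    (hlevel : {u : EuclideanSpace ℝ (Fin 3) |
      eval u (weightedSumSq ![A, B, C]) = eval v (weightedSumSq ![A, B, C])} ⊆ Metric.ball 0 ρ) :
    ∃ p ∈ Metric.ball 0 ρ ∩ (fracX A B C f g h \ {0}),
      ∃ p' ∈ Metric.ball 0 ρ ∩ (fracX A B C f g h \ {0}),
        quotFun f g p ≤ quotFun f g v ∧ quotFun f g v ≤ quotFun f g p' := by
  set N := weightedSumSq ![A, B, C]
  set K := {u : EuclideanSpace ℝ (Fin 3) | eval u N = eval v N ∧ eval u h = 0}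
  have hvK : v ∈ K := ⟨rfl, hv⟩
  have hK0 : ∀ u ∈ K, u ≠ 0 := by
    rintro u ⟨hu, -⟩ rfl
    have hNv : 0 < eval v N :=
      (by positivity : 0 < m * ‖v‖ ^ 2).trans_le (mul_norm_sq_le_eval_weightedSumSq ham v)
    rw [WithLp.ofLp_zero, eval_weightedSumSq_zero] at hu
    linarith
  have hKg : ∀ u ∈ K, eval u g ≠ 0 := fun u hu hgu => hK0 u hu (hgρ u (hlevel hu.1) hgu)
  have hKcompact : IsCompact K :=
    Metric.isCompact_of_isClosed_isBounded
      ((isClosed_eq (continuous_eval_euclideanSpace N) continuous_const).inter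
        (isClosed_eq (continuous_eval_euclideanSpace h) continuous_const))
      (Metric.isBounded_ball.subset fun u hu => hlevel hu.1)
  have hq : ContinuousOn (quotFun f g) K := fun u hu =>
    (continuousAt_quotFun f g (hKg u hu)).continuousWithinAt
  have hcrit : ∀ p ∈ K, IsLocalExtrOn (quotFun f g) K p →
      p ∈ Metric.ball 0 ρ ∩ (fracX A B C f g h \ {0}) := by
    intro p hp hextr
    have hKp : K = {u : EuclideanSpace ℝ (Fin 3) | eval u N = eval p N ∧ eval u h = eval p h} := by
      rw [hp.1, hp.2]
    exact ⟨hlevel hp.1, ⟨hp.2, eval_ePoly_eq_zero_of_isLocalExtrOn (hKg p hp) (hKp ▸ hextr)⟩,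
      hK0 p hp⟩
  obtain ⟨p, hpK, hpmin⟩ := hKcompact.exists_isMinOn ⟨v, hvK⟩ hq
  obtain ⟨p', hp'K, hp'max⟩ := hKcompact.exists_isMaxOn ⟨v, hvK⟩ hq
  exact ⟨p, hcrit p hpK (Or.inl hpmin.localize), p', hcrit p' hp'K (Or.inr hp'max.localize),
    hpmin hvK, hp'max hvK⟩

theorem limit_along_surface_iff_limit_along_curves_general (f g : MvPolynomial (Fin 3) ℝ)
    (hg : ∃ ε > 0, ∀ v ∈ Metric.ball (0 : EuclideanSpace ℝ (Fin 3)) ε, eval v g = 0 → v = 0)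
    (h : MvPolynomial (Fin 3) ℝ)
    (A B C : ℝ) (hA : 0 < A) (hB : 0 < B) (hC : 0 < C) (L : ℝ) :
    TendsAlong f g (surf h) L ↔
      TendsAlong f g (singLocus h) L ∧ TendsAlong f g (fracX A B C f g h) L ∧
        TendsAlong f g (fracZ A B C h) L := by
  refine ⟨fun hX => ⟨hX.mono fun _ hv => hv.1, hX.mono fun _ hv => hv.1,
    hX.mono fun _ hv => hv.1⟩, fun ⟨_, hfracX, _⟩ => ?_⟩
  obtain ⟨ε, hε, hgε⟩ := hg
  have hm : 0 < min A (min B C) := lt_min hA (lt_min hB hC)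
  have ham : ∀ i, min A (min B C) ≤ ![A, B, C] i := by
    intro i; fin_cases i <;> simp
  refine tendsto_of_forall_mem_exists_between hfracX fun U hU => ?_
  obtain ⟨δ, hδ, hδU⟩ := Metric.mem_nhdsWithin_iff.mp hU
  filter_upwards [self_mem_nhdsWithin, nhdsWithin_le_nhds
    (eventually_levelSet_weightedSumSq_subset_ball hm ham (lt_min hδ hε))]
    with v ⟨hv, hv0⟩ hlevel
  have hball : Metric.ball 0 (min δ ε) ∩ (fracX A B C f g h \ {0}) ⊆ U :=
    (Set.inter_subset_inter_left _ (Metric.ball_subset_ball (min_le_left _ _))).trans hδU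
  obtain ⟨p, hp, p', hp', hle⟩ := exists_mem_fracX_quotFun_le_le hm ham
    (fun u hu => hgε u (Metric.ball_subset_ball (min_le_right _ _) hu)) hv hv0 hlevel
  exact ⟨p, hball hp, p', hball hp', hle⟩

/-- Reduction of the limit along a two-dimensional component `{h = 0}` of the discriminant
variety to limits along the curves `S_ℝ`, `𝔛_ℝ` and `𝔷_ℝ`. -/
theorem limit_along_surface_iff_limit_along_curves (f g : MvPolynomial (Fin 3) ℝ)
    (hg : ∃ ε > 0, ∀ v ∈ Metric.ball (0 : EuclideanSpace ℝ (Fin 3)) ε, eval v g = 0 → v = 0)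
    (h : MvPolynomial (Fin 3) ℝ) (hirr : Irreducible h) (h0 : eval (0 : Fin 3 → ℝ) h = 0)
    (hdvd01 : h ∣ minorPoly f g 0 1) (hdvd02 : h ∣ minorPoly f g 0 2)
    (hdvd12 : h ∣ minorPoly f g 1 2)
    (A B C : ℝ) (hA : 0 < A) (hB : 0 < B) (hC : 0 < C) (L : ℝ) :
    TendsAlong f g (surf h) L ↔
      TendsAlong f g (singLocus h) L ∧ TendsAlong f g (fracX A B C f g h) L ∧
        TendsAlong f g (fracZ A B C h) L :=
  limit_along_surface_iff_limit_along_curves_general f g hg h A B C hA hB hC L
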